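/- Let μ be a Borel probability measure on the torus and m a non-zero positive integer. Let f_m(r) = mr mod 1 and (f_m)_*μ the pushforward measure. Then the lower and upper Rényi dimensions of μ and of (f_m)_*μ coincide: dim_R⁻(μ) = dim_R⁻((f_m)_*μ) and dim_R⁺(μ) = dim_R⁺((f_m)_*μ). -/

import Mathlib

open MeasureTheory Filter Topology Real
open scoped ENNReal

noncomputable section

abbrev Cantor := ℕ → Bool

/-- `j`-fold left shift of a binary sequence. -/
def shiftk (x : Cantor) (j : ℕ) : Cantor := fun i => x (i + j)

/-- the left shift `T`. -/
def Tshift (x : Cantor) : Cantor := fun i => x (i + 1)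

/-- binary evaluation map `v`. -/
noncomputable def eval (x : Cantor) : ℝ := ∑' i : ℕ, if x i then ((2:ℝ) ^ (i + 1))⁻¹ else 0

noncomputable def negMulLog2 (p : ℝ) : ℝ := - p * Real.logb 2 p

/-- sliding count probability of a word `w` of length `l` in the prefix `x_0^{n-1}`. -/
noncomputable def slidingP (x : Cantor) (n l : ℕ) (w : Fin l → Bool) : ℝ :=
  (((Finset.range (n - l + 1)).filter (fun i => ∀ j : Fin l, x (i + (j : ℕ)) = w j)).card : ℝ)
    / ((n - l + 1 : ℕ) : ℝ)

/-- sliding block entropy `H_l(x_0^{n-1})`. -/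
noncomputable def slidingH (x : Cantor) (n l : ℕ) : ℝ :=
  (1 / (l : ℝ)) * ∑ w : Fin l → Bool, negMulLog2 (slidingP x n l w)

/-- disjoint block probability `P^d`. -/
noncomputable def disjP (x : Cantor) (n l : ℕ) (w : Fin l → Bool) : ℝ :=
  (((Finset.range (n / l)).filter (fun i => ∀ j : Fin l, x (l * i + (j : ℕ)) = w j)).card : ℝ)
    / ((n / l : ℕ) : ℝ)

/-- disjoint block entropy `H^d_l(x_0^{n-1})`. -/
noncomputable def disjH (x : Cantor) (n l : ℕ) : ℝ :=
  (1 / (l : ℝ)) * ∑ w : Fin l → Bool, negMulLog2 (disjP x n l w)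

/-- finite-state dimension via sliding block entropies. -/
noncomputable def dimFS (x : Cantor) : ℝ :=
  ⨅ l : ℕ, Filter.liminf (fun n => slidingH x n (l + 1)) Filter.atTop

/-- finite-state strong dimension. -/
noncomputable def DimFS (x : Cantor) : ℝ :=
  ⨅ l : ℕ, Filter.limsup (fun n => slidingH x n (l + 1)) Filter.atTop

/-- cylinder set. -/
def Cyl (l : ℕ) (w : Fin l → Bool) : Set Cantor := {y | ∀ j : Fin l, y (j : ℕ) = w j}

/-- empirical measures `ν_n = n⁻¹ ∑_{j<n} δ_{T^j x}` on Cantor space. -/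
noncomputable def empMeas (x : Cantor) (n : ℕ) : Measure Cantor :=
  (n : ℝ≥0∞)⁻¹ • ∑ j ∈ Finset.range n, Measure.dirac (shiftk x j)

/-- weak convergence of a sequence of measures. -/
def WeakConv {α : Type*} [TopologicalSpace α] [MeasurableSpace α]
    (ν : ℕ → Measure α) (μ : Measure α) : Prop :=
  ∀ f : BoundedContinuousFunction α ℂ,
    Tendsto (fun n => ∫ y, f y ∂(ν n)) atTop (nhds (∫ y, f y ∂μ))

/-- block entropy `H_n(μ)` of a measure on Cantor space. -/
noncomputable def measH (μ : Measure Cantor) (n : ℕ) : ℝ :=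
  ∑ w : Fin n → Bool, negMulLog2 ((μ (Cyl n w)).toReal)

/-- lower average entropy. -/
noncomputable def Hminus (μ : Measure Cantor) : ℝ :=
  Filter.liminf (fun n => measH μ n / n) Filter.atTop

/-- upper average entropy. -/
noncomputable def Hplus (μ : Measure Cantor) : ℝ :=
  Filter.limsup (fun n => measH μ n / n) Filter.atTop

/-- set of subsequence weak limits of the empirical measures of `x`. -/
def Wx (x : Cantor) : Set (Measure Cantor) :=
  {μ | IsProbabilityMeasure μ ∧
      ∃ φ : ℕ → ℕ, StrictMono φ ∧ (∀ m, 0 < φ m) ∧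
        WeakConv (fun m => empMeas x (φ m)) μ}

/-- normality of a binary sequence. -/
def IsNormal (x : Cantor) : Prop :=
  ∀ (l : ℕ) (w : Fin l → Bool),
    Tendsto (fun n => slidingP x n l w) atTop (nhds (((2:ℝ) ^ l)⁻¹))

/-- Weyl averages `(1/n) ∑_{j<n} e^{2πik v(T^j x)}`. -/
noncomputable def weylAvg (x : Cantor) (k : ℤ) (n : ℕ) : ℂ :=
  (n : ℂ)⁻¹ * ∑ j ∈ Finset.range n,
    Complex.exp (2 * (Real.pi : ℂ) * Complex.I * (k : ℂ) * ((eval (shiftk x j) : ℝ) : ℂ))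

/-- Weyl averages on the torus, `(1/n) ∑_{j<n} e^{2πik 2^j r}`. -/
noncomputable def weylAvgT (r : ℝ) (k : ℤ) (n : ℕ) : ℂ :=
  (n : ℂ)⁻¹ * ∑ j ∈ Finset.range n,
    Complex.exp (2 * (Real.pi : ℂ) * Complex.I * (k : ℂ) * (((2:ℝ) ^ j * r : ℝ) : ℂ))

/-- empirical measures `(1/n) ∑_{j<n} δ_{2^j r mod 1}` on the torus. -/
noncomputable def empMeasT (r : ℝ) (n : ℕ) : Measure UnitAddCircle :=
  (n : ℝ≥0∞)⁻¹ • ∑ j ∈ Finset.range n, Measure.dirac (((2:ℝ) ^ j * r : ℝ) : UnitAddCircle)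

/-- dyadic interval `[j/2^k, (j+1)/2^k)` on the torus. -/
def dyadicI (k j : ℕ) : Set UnitAddCircle :=
  (fun t : ℝ => (t : UnitAddCircle)) '' Set.Ico ((j : ℝ) / 2 ^ k) (((j : ℝ) + 1) / 2 ^ k)

/-- a real number is a dyadic rational. -/
def IsDyadic (t : ℝ) : Prop := ∃ (a : ℤ) (n : ℕ), t = (a : ℝ) / 2 ^ n

/-- value of a finite binary word. -/
noncomputable def val2 (l : ℕ) (w : Fin l → Bool) : ℝ :=
  ∑ j : Fin l, if w j then ((2:ℝ) ^ ((j : ℕ) + 1))⁻¹ else 0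

/-- dyadic interval `I_w` on the torus. -/
def IwT (l : ℕ) (w : Fin l → Bool) : Set UnitAddCircle :=
  (fun t : ℝ => (t : UnitAddCircle)) '' Set.Ico (val2 l w) (val2 l w + ((2:ℝ) ^ l)⁻¹)

/-- value of a finite base-`m` word. -/
noncomputable def valm (m n : ℕ) (w : Fin n → Fin m) : ℝ :=
  ∑ j : Fin n, ((w j : ℕ) : ℝ) / (m : ℝ) ^ ((j : ℕ) + 1)

/-- base-`m` interval `I^m_w` on the torus. -/
def ImT (m n : ℕ) (w : Fin n → Fin m) : Set UnitAddCircle :=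
  (fun t : ℝ => (t : UnitAddCircle)) '' Set.Ico (valm m n w) (valm m n w + ((m : ℝ) ^ n)⁻¹)

/-- base-`m` partition entropy `H^m_n(μ)` (natural logarithm). -/
noncomputable def measHT (μ : Measure UnitAddCircle) (m n : ℕ) : ℝ :=
  ∑ w : Fin n → Fin m, Real.negMulLog ((μ (ImT m n w)).toReal)

/-- lower Rényi dimension w.r.t. partition factor `m`. -/
noncomputable def renyiLower (μ : Measure UnitAddCircle) (m : ℕ) : ℝ :=
  Filter.liminf (fun n => measHT μ m n / (n * Real.log m)) Filter.atTop

/-- upper Rényi dimension w.r.t. partition factor `m`. -/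
noncomputable def renyiUpper (μ : Measure UnitAddCircle) (m : ℕ) : ℝ :=
  Filter.limsup (fun n => measHT μ m n / (n * Real.log m)) Filter.atTop


/-!
Both `H^p_n(μ)` and `H^p_n((f_m)_*μ)` are entropies of coarsenings of a single partition, the
partition `F` of `𝕋` into the `p^n m` intervals of length `1/(p^n m)`: the `p`-adic interval of
index `s` is the union of the cells `m s + j` of `F`, and its preimage under `f_m` is the union of
the cells `s + j p^n` (`j < m`). Merging at most `m` cells at a time lowers entropy by at most
`log m`, so both entropies lie in `[H(F) - log m, H(F)]`, and their difference vanishes after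
division by `n log p`.
-/

namespace Real

open Finset

lemma negMulLog_sum_le_sum_negMulLog {ι : Type*} (s : Finset ι) {q : ι → ℝ}
    (hq : ∀ i ∈ s, 0 ≤ q i) :
    negMulLog (∑ i ∈ s, q i) ≤ ∑ i ∈ s, negMulLog (q i) := by
  simp only [negMulLog, neg_mul, Finset.sum_neg_distrib, Finset.sum_mul, neg_le_neg_iff]
  refine Finset.sum_le_sum fun i hi => ?_
  rcases (hq i hi).eq_or_lt with h | h
  · simp [← h]
  · exact mul_le_mul_of_nonneg_left (log_le_log h (single_le_sum hq hi)) h.le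

lemma sum_negMulLog_le_negMulLog_sum_add {ι : Type*} (s : Finset ι) {q : ι → ℝ}
    (hq : ∀ i ∈ s, 0 ≤ q i) :
    ∑ i ∈ s, negMulLog (q i) ≤ negMulLog (∑ i ∈ s, q i) + (∑ i ∈ s, q i) * log #s := by
  rcases s.eq_empty_or_nonempty with rfl | hs
  · simp
  have hN : (0 : ℝ) < #s := by exact_mod_cast hs.card_pos
  have hjensen := concaveOn_negMulLog.le_map_sum (t := s) (w := fun _ => (#s : ℝ)⁻¹) (p := q)
    (fun _ _ => by positivity) (by simp [hN.ne']) hq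
  simp only [smul_eq_mul, ← Finset.mul_sum, negMulLog_mul] at hjensen
  have hinv : negMulLog (#s : ℝ)⁻¹ = (#s : ℝ)⁻¹ * log #s := by simp [negMulLog, log_inv]
  rw [hinv] at hjensen
  rw [← mul_le_mul_iff_right₀ (inv_pos.2 hN)]
  linarith

end Real

section ShannonEntropy

open Finset

variable {α β γ : Type*} [Fintype α] [MeasurableSpace α]

def shannonEntropy (ρ : Measure α) : ℝ := ∑ a, negMulLog (ρ.real {a})

lemma measureReal_map_singleton [DiscreteMeasurableSpace α] [MeasurableSpace β]
    [MeasurableSingletonClass β] [DecidableEq β] (ρ : Measure α) [IsFiniteMeasure ρ] (f : α → β)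
    (b : β) :
    (ρ.map f).real {b} = ∑ a with f a = b, ρ.real {a} := by
  rw [map_measureReal_apply .of_discrete (measurableSet_singleton b), sum_measureReal_singleton]
  congr 1
  ext a
  simp

lemma shannonEntropy_map_le [DiscreteMeasurableSpace α] [Fintype β] [MeasurableSpace β]
    [MeasurableSingletonClass β] (ρ : Measure α) [IsFiniteMeasure ρ] (f : α → β) :
    shannonEntropy (ρ.map f) ≤ shannonEntropy ρ := by
  classical
  calc shannonEntropy (ρ.map f)
      = ∑ b, negMulLog (∑ a with f a = b, ρ.real {a}) := by
        simp only [shannonEntropy, measureReal_map_singleton]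
    _ ≤ ∑ b, ∑ a with f a = b, negMulLog (ρ.real {a}) :=
        sum_le_sum fun b _ => negMulLog_sum_le_sum_negMulLog _ fun _ _ => measureReal_nonneg
    _ = shannonEntropy ρ := sum_fiberwise _ _ _

lemma shannonEntropy_le_shannonEntropy_map_add [DiscreteMeasurableSpace α] [Fintype β]
    [MeasurableSpace β] [MeasurableSingletonClass β] [Fintype γ] (ρ : Measure α)
    [IsFiniteMeasure ρ] (f : α → β) (g : α → γ) (hfg : Function.Injective fun a => (f a, g a)) :
    shannonEntropy ρ ≤ shannonEntropy (ρ.map f) + ρ.real Set.univ * log (Fintype.card γ) := by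
  classical
  have hfiber : ∀ b, log #{a | f a = b} ≤ log (Fintype.card γ) := fun b => by
    have hcard : #{a | f a = b} ≤ Fintype.card γ :=
      card_le_card_of_injOn g (fun _ _ => mem_univ _) fun a ha a' ha' h =>
        hfg (Prod.ext ((mem_filter.1 ha).2.trans (mem_filter.1 ha').2.symm) h)
    rcases Nat.eq_zero_or_pos #{a | f a = b} with h | h
    · simp [h, log_natCast_nonneg]
    · exact log_le_log (by exact_mod_cast h) (by exact_mod_cast hcard)
  calc shannonEntropy ρ = ∑ b, ∑ a with f a = b, negMulLog (ρ.real {a}) :=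
        (sum_fiberwise _ _ _).symm
    _ ≤ ∑ b, (negMulLog ((ρ.map f).real {b}) + (ρ.map f).real {b} * log (Fintype.card γ)) := by
        refine sum_le_sum fun b _ => ?_
        rw [measureReal_map_singleton]
        refine (sum_negMulLog_le_negMulLog_sum_add _ fun _ _ => measureReal_nonneg).trans ?_
        exact add_le_add_right
          (mul_le_mul_of_nonneg_left (hfiber b) (sum_nonneg fun _ _ => measureReal_nonneg)) _
    _ = shannonEntropy (ρ.map f) + ρ.real Set.univ * log (Fintype.card γ) := by
        rw [sum_add_distrib, ← sum_mul, sum_measureReal_singleton, coe_univ,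
          map_measureReal_apply .of_discrete MeasurableSet.univ, Set.preimage_univ]
        rfl

lemma shannonEntropy_nonneg (ρ : Measure α) [IsProbabilityMeasure ρ] : 0 ≤ shannonEntropy ρ :=
  sum_nonneg fun _ _ => negMulLog_nonneg measureReal_nonneg measureReal_le_one

lemma shannonEntropy_le_log_card [MeasurableSingletonClass α] (ρ : Measure α)
    [IsProbabilityMeasure ρ] : shannonEntropy ρ ≤ log (Fintype.card α) := by
  have h := sum_negMulLog_le_negMulLog_sum_add (univ : Finset α)
    (q := fun a => ρ.real {a}) fun _ _ => measureReal_nonneg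
  rwa [sum_measureReal_singleton, coe_univ, probReal_univ, negMulLog_one, zero_add, one_mul,
    card_univ] at h

end ShannonEntropy

section LimsupOfTendstoSub

variable {ι : Type*} {l : Filter ι} [l.NeBot] {u v : ι → ℝ}

lemma Filter.limsup_eq_of_tendsto_sub (hv : IsBoundedUnder (· ≤ ·) l v)
    (hv' : IsBoundedUnder (· ≥ ·) l v) (h : Tendsto (u - v) l (𝓝 0)) :
    limsup u l = limsup v l := by
  have hu : u = v + (u - v) := by simp
  apply le_antisymm
  · calc limsup u l = limsup (v + (u - v)) l := by rw [← hu]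
      _ ≤ limsup v l + limsup (u - v) l :=
        limsup_add_le hv' hv h.isBoundedUnder_ge.isCoboundedUnder_le h.isBoundedUnder_le
      _ = limsup v l := by rw [h.limsup_eq, add_zero]
  · calc limsup v l = limsup v l + liminf (u - v) l := by rw [h.liminf_eq, add_zero]
      _ ≤ limsup (v + (u - v)) l :=
        le_limsup_add hv hv'.isCoboundedUnder_le h.isBoundedUnder_le h.isBoundedUnder_ge
      _ = limsup u l := by rw [← hu]

lemma Filter.liminf_eq_of_tendsto_sub (hv : IsBoundedUnder (· ≤ ·) l v)
    (hv' : IsBoundedUnder (· ≥ ·) l v) (h : Tendsto (u - v) l (𝓝 0)) :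
    liminf u l = liminf v l := by
  have hu : u = (u - v) + v := by simp
  apply le_antisymm
  · calc liminf u l = liminf ((u - v) + v) l := by rw [← hu]
      _ ≤ limsup (u - v) l + liminf v l :=
        liminf_add_le h.isBoundedUnder_ge h.isBoundedUnder_le hv' hv.isCoboundedUnder_ge
      _ = liminf v l := by rw [h.limsup_eq, zero_add]
  · calc liminf v l = liminf (u - v) l + liminf v l := by rw [h.liminf_eq, zero_add]
      _ ≤ liminf ((u - v) + v) l :=
        le_liminf_add h.isBoundedUnder_ge h.isBoundedUnder_le hv' hv.isCoboundedUnder_ge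
      _ = liminf u l := by rw [← hu]

end LimsupOfTendstoSub

lemma liminf_div_eq_and_limsup_div_eq_of_abs_sub_le {F G : ℕ → ℝ} {c C : ℝ} (hc : 0 < c)
    (hF₀ : ∀ n, 0 ≤ F n) (hF : ∀ n, F n ≤ n * c) (hFG : ∀ n, |F n - G n| ≤ C) :
    liminf (fun n => F n / (n * c)) atTop = liminf (fun n => G n / (n * c)) atTop ∧
    limsup (fun n => F n / (n * c)) atTop = limsup (fun n => G n / (n * c)) atTop := by
  have hbound : ∀ n : ℕ, 0 ≤ F n / (n * c) ∧ F n / (n * c) ≤ 1 := fun n => by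
    rcases n.eq_zero_or_pos with rfl | hn
    · simp
    have hnc : 0 < (n : ℝ) * c := by positivity
    exact ⟨div_nonneg (hF₀ n) hnc.le, (div_le_one hnc).2 (hF n)⟩
  have hle : IsBoundedUnder (· ≤ ·) atTop fun n => F n / (n * c) :=
    isBoundedUnder_of ⟨1, fun n => (hbound n).2⟩
  have hge : IsBoundedUnder (· ≥ ·) atTop fun n => F n / (n * c) :=
    isBoundedUnder_of ⟨0, fun n => (hbound n).1⟩
  have htendsto : Tendsto ((fun n => G n / (n * c)) - fun n => F n / (n * c)) atTop (𝓝 0) := by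
    refine squeeze_zero_norm (fun n => ?_) (tendsto_const_div_atTop_nhds_zero_nat (C / c))
    rw [Pi.sub_apply, ← sub_div, norm_div, Real.norm_eq_abs, Real.norm_eq_abs, abs_sub_comm,
      abs_of_nonneg (by positivity : (0 : ℝ) ≤ n * c), div_div, mul_comm c]
    exact div_le_div_of_nonneg_right (hFG n) (by positivity)
  exact ⟨(liminf_eq_of_tendsto_sub hle hge htendsto).symm,
    (limsup_eq_of_tendsto_sub hle hge htendsto).symm⟩

lemma Nat.floor_mul_fract (P : ℕ) {y : ℝ} (hy : 0 ≤ y) :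
    ⌊P * Int.fract y⌋₊ = ⌊P * y⌋₊ % P := by
  rcases P.eq_zero_or_pos with rfl | hP
  · simp
  have hPy : 0 ≤ (P : ℝ) * y := by positivity
  have hdiv : ⌊y⌋ = ⌊(P : ℝ) * y⌋ / P := by
    rw [← Int.floor_div_natCast, mul_div_cancel_left₀ _ (by positivity)]
  have hcast : (P : ℝ) * ⌊y⌋ = ((P * ⌊y⌋ : ℤ) : ℝ) := by push_cast; ring
  zify
  rw [Int.natCast_floor_eq_floor (by positivity), Int.natCast_floor_eq_floor hPy, Int.fract,
    mul_sub, hcast, Int.floor_sub_intCast, hdiv, Int.emod_def]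

lemma Nat.floor_mul_mul_div (P : ℕ) {m : ℕ} (hm : m ≠ 0) (t : ℝ) :
    ⌊(P * m : ℕ) * t⌋₊ / m = ⌊P * t⌋₊ := by
  rw [← Nat.floor_div_natCast]
  congr 1
  push_cast
  field_simp

lemma equivIco_mem_Ico (x : UnitAddCircle) : (AddCircle.equivIco 1 0 x : ℝ) ∈ Set.Ico 0 1 := by
  simpa using (AddCircle.equivIco 1 0 x).2

def cellIndex (N : ℕ) [NeZero N] (x : UnitAddCircle) : Fin N :=
  ⟨⌊N * (AddCircle.equivIco 1 0 x : ℝ)⌋₊, by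
    have hx := equivIco_mem_Ico x
    have hN : (0 : ℝ) < N := by exact_mod_cast (NeZero.pos N)
    exact (Nat.floor_lt (by nlinarith [hx.1])).2 (by nlinarith [hx.2])⟩

section CellIndex

variable {N : ℕ} [NeZero N]

lemma cellIndex_coe (t : ℝ) : (cellIndex N t : ℕ) = ⌊N * Int.fract t⌋₊ := by
  simp [cellIndex, AddCircle.coe_equivIco_mk_apply]

lemma cellIndex_coe_of_mem {t : ℝ} (ht : t ∈ Set.Ico (0 : ℝ) 1) :
    (cellIndex N t : ℕ) = ⌊N * t⌋₊ := by
  rw [cellIndex_coe, Int.fract_eq_self.2 ht]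

lemma measurable_cellIndex : Measurable (cellIndex N) := by
  refine measurable_to_countable' fun k => ?_
  have : cellIndex N ⁻¹' {k} =
      (fun x => ⌊N * (AddCircle.equivIco 1 0 x : ℝ)⌋₊) ⁻¹' {(k : ℕ)} := by
    ext x
    simp [cellIndex, Fin.ext_iff]
  rw [this]
  exact (measurable_const.mul (measurable_subtype_coe.comp
    (AddCircle.measurableEquivIco 1 0).measurable)).nat_floor (measurableSet_singleton _)

lemma cellIndex_preimage_singleton (k : Fin N) :
    cellIndex N ⁻¹' {k} =
      (fun t : ℝ => (t : UnitAddCircle)) '' Set.Ico ((k : ℝ) / N) (((k : ℝ) + 1) / N) := by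
  have hN : (0 : ℝ) < N := by exact_mod_cast NeZero.pos N
  have hcell : ∀ t ∈ Set.Ico (0 : ℝ) 1,
      cellIndex N t = k ↔ t ∈ Set.Ico ((k : ℝ) / N) (((k : ℝ) + 1) / N) := fun t ht => by
    rw [Fin.ext_iff, cellIndex_coe_of_mem ht, Nat.floor_eq_iff (by nlinarith [ht.1]),
      Set.mem_Ico, div_le_iff₀ hN, lt_div_iff₀ hN, mul_comm t]
  ext x
  constructor
  · intro hx
    have hcoe : ((AddCircle.equivIco 1 0 x : ℝ) : UnitAddCircle) = x :=
      (AddCircle.equivIco 1 0).symm_apply_apply x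
    refine ⟨_, (hcell _ (equivIco_mem_Ico x)).1 ?_, hcoe⟩
    rwa [hcoe]
  · rintro ⟨t, ht, rfl⟩
    have hk : (k : ℝ) + 1 ≤ N := by exact_mod_cast k.2
    have hmem : t ∈ Set.Ico (0 : ℝ) 1 :=
      ⟨le_trans (by positivity) ht.1, ht.2.trans_le ((div_le_one hN).2 hk)⟩
    exact (hcell t hmem).2 ht

end CellIndex

lemma divNat_cellIndex (P : ℕ) {m : ℕ} [NeZero P] [NeZero m] (x : UnitAddCircle) :
    (cellIndex (P * m) x).divNat = cellIndex P x :=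
  Fin.ext (Nat.floor_mul_mul_div P (NeZero.ne m) _)

lemma cellIndex_nsmul (P m : ℕ) [NeZero P] [NeZero m] (x : UnitAddCircle) :
    cellIndex P (m • x) = (Fin.cast (mul_comm P m) (cellIndex (P * m) x)).modNat := by
  induction x using QuotientAddGroup.induction_on with
  | H t =>
    have hfract : Int.fract (m * t) = Int.fract (m * Int.fract t) := by
      rw [← Int.fract_add_intCast (m * Int.fract t) (m * ⌊t⌋)]
      congr 1
      push_cast
      rw [Int.fract]
      ring
    apply Fin.ext
    rw [Fin.coe_modNat, Fin.val_cast, ← AddCircle.coe_nsmul, nsmul_eq_mul, cellIndex_coe,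
      cellIndex_coe, hfract, Nat.floor_mul_fract P (by positivity [Int.fract_nonneg t])]
    push_cast
    ring_nf

def wordEquiv (p n : ℕ) : (Fin n → Fin p) ≃ Fin (p ^ n) :=
  (Equiv.arrowCongr Fin.revPerm (Equiv.refl (Fin p))).trans finFunctionFinEquiv

lemma valm_eq_wordEquiv_div {p : ℕ} [NeZero p] {n : ℕ} (w : Fin n → Fin p) :
    valm p n w = (wordEquiv p n w : ℕ) / (p : ℝ) ^ n := by
  have hp : (0 : ℝ) < p := by exact_mod_cast NeZero.pos p
  rw [eq_div_iff (by positivity), valm, Finset.sum_mul, wordEquiv, Equiv.trans_apply,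
    finFunctionFinEquiv_apply, Nat.cast_sum, ← Equiv.sum_comp Fin.revPerm]
  refine Finset.sum_congr rfl fun j _ => ?_
  have hpow : (p : ℝ) ^ n = (p : ℝ) ^ ((Fin.rev j : ℕ) + 1) * (p : ℝ) ^ (j : ℕ) := by
    rw [← pow_add, Fin.val_rev]
    congr 1
    omega
  simp only [Equiv.arrowCongr_apply, Equiv.refl_apply, Function.comp_apply, Fin.revPerm_symm,
    Fin.revPerm_apply]
  rw [hpow]
  push_cast
  field_simp

lemma ImT_eq_preimage_cellIndex {p : ℕ} [NeZero p] {n : ℕ} (w : Fin n → Fin p) :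
    ImT p n w = cellIndex (p ^ n) ⁻¹' {wordEquiv p n w} := by
  rw [cellIndex_preimage_singleton, ImT, valm_eq_wordEquiv_div, add_div, Nat.cast_pow, one_div]

section MeasHT

variable (p : ℕ) [NeZero p] (n : ℕ)

lemma measHT_eq_shannonEntropy_map (ρ : Measure UnitAddCircle) :
    measHT ρ p n = shannonEntropy (ρ.map (cellIndex (p ^ n))) := by
  rw [measHT, shannonEntropy, ← (wordEquiv p n).sum_comp]
  refine Finset.sum_congr rfl fun w _ => ?_
  rw [map_measureReal_apply measurable_cellIndex (measurableSet_singleton _),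
    ← ImT_eq_preimage_cellIndex]
  rfl

lemma measHT_nonneg (ρ : Measure UnitAddCircle) [IsProbabilityMeasure ρ] : 0 ≤ measHT ρ p n := by
  have := Measure.isProbabilityMeasure_map (μ := ρ) (measurable_cellIndex (N := p ^ n)).aemeasurable
  rw [measHT_eq_shannonEntropy_map]
  exact shannonEntropy_nonneg _

lemma measHT_le (ρ : Measure UnitAddCircle) [IsProbabilityMeasure ρ] :
    measHT ρ p n ≤ n * log p := by
  have := Measure.isProbabilityMeasure_map (μ := ρ) (measurable_cellIndex (N := p ^ n)).aemeasurable
  rw [measHT_eq_shannonEntropy_map]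
  simpa [Real.log_pow] using shannonEntropy_le_log_card (ρ.map (cellIndex (p ^ n)))

lemma abs_measHT_sub_measHT_map_nsmul_le (μ : Measure UnitAddCircle) [IsFiniteMeasure μ]
    (m : ℕ) [NeZero m] :
    |measHT μ p n - measHT (μ.map (m • ·)) p n| ≤ μ.real Set.univ * log m := by
  set ρ := μ.map (cellIndex (p ^ n * m))
  have hρ : ρ.real Set.univ = μ.real Set.univ := by
    rw [map_measureReal_apply measurable_cellIndex MeasurableSet.univ, Set.preimage_univ]
  have hμ : measHT μ p n = shannonEntropy (ρ.map Fin.divNat) := by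
    rw [measHT_eq_shannonEntropy_map, Measure.map_map .of_discrete measurable_cellIndex]
    congr
    exact funext fun x => (divNat_cellIndex (p ^ n) x).symm
  have hν : measHT (μ.map (m • ·)) p n =
      shannonEntropy (ρ.map fun k => (Fin.cast (mul_comm _ m) k).modNat) := by
    rw [measHT_eq_shannonEntropy_map, Measure.map_map measurable_cellIndex
      (continuous_nsmul m).measurable, Measure.map_map .of_discrete measurable_cellIndex]
    congr 2
    exact funext fun x => cellIndex_nsmul (p ^ n) m x
  have h₁ := shannonEntropy_map_le ρ Fin.divNat
  have h₂ := shannonEntropy_le_shannonEntropy_map_add ρ Fin.divNat Fin.modNat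
    finProdFinEquiv.symm.injective
  have h₃ := shannonEntropy_map_le ρ fun k => (Fin.cast (mul_comm _ m) k).modNat
  have h₄ := shannonEntropy_le_shannonEntropy_map_add ρ
    (fun k => (Fin.cast (mul_comm _ m) k).modNat) (fun k => (Fin.cast (mul_comm _ m) k).divNat)
    (Prod.swap_injective.comp (finProdFinEquiv.symm.injective.comp (Fin.cast_injective _)))
  rw [hρ, Fintype.card_fin] at h₂ h₄
  rw [abs_sub_le_iff, hμ, hν]
  constructor <;> linarith

end MeasHT

/-- Rényi dimensions are invariant under pushforward by multiplication by m. -/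
theorem renyi_dimension_pushforward_invariant
    (μ : Measure UnitAddCircle) (hμ : IsProbabilityMeasure μ) (m : ℕ) (hm : 0 < m)
    (p : ℕ) (hp : 2 ≤ p) :
    renyiLower μ p = renyiLower (Measure.map (fun y : UnitAddCircle => m • y) μ) p ∧
    renyiUpper μ p = renyiUpper (Measure.map (fun y : UnitAddCircle => m • y) μ) p := by
  have : NeZero p := ⟨by omega⟩
  have : NeZero m := ⟨hm.ne'⟩
  have hlogp : 0 < log p := log_pos (by exact_mod_cast hp)
  exact liminf_div_eq_and_limsup_div_eq_of_abs_sub_le hlogp (measHT_nonneg p · μ)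
    (measHT_le p · μ) fun n => by
      simpa using abs_measHT_sub_measHT_map_nsmul_le p n μ m

end
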